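/- Let S = K[x_1,…,x_n] be a polynomial ring over a field K and I ⊂ S a proper nonzero vertex splittable monomial ideal generated by monomials all of the same degree α(I). Then v(I^k) = α(I)·k − 1 for all k ≥ 1. -/

import Mathlib

open MvPolynomial

/-- A graded (homogeneous) ideal: one generated by homogeneous polynomials. -/
def IsHomogeneousIdeal {K : Type*} [Field K] {n : ℕ}
    (I : Ideal (MvPolynomial (Fin n) K)) : Prop :=
  ∃ G : Set (MvPolynomial (Fin n) K),
    (∀ f ∈ G, ∃ d, f.IsHomogeneous d) ∧ I = Ideal.span G

/-- `Ass(I)`: the associated primes of `S/I`. -/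
def Ass {K : Type*} [Field K] {n : ℕ} (I : Ideal (MvPolynomial (Fin n) K)) :
    Set (Ideal (MvPolynomial (Fin n) K)) :=
  associatedPrimes (MvPolynomial (Fin n) K) (MvPolynomial (Fin n) K ⧸ I)

/-- The local v-number `v_p(I)`. -/
noncomputable def vNumberAt {K : Type*} [Field K] {n : ℕ}
    (I p : Ideal (MvPolynomial (Fin n) K)) : ℕ :=
  sInf {d | ∃ f : MvPolynomial (Fin n) K, f.IsHomogeneous d ∧
    I.colon (Ideal.span {f}) = p}

/-- The v-number `v(I)`. -/
noncomputable def vNumber {K : Type*} [Field K] {n : ℕ}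
    (I : Ideal (MvPolynomial (Fin n) K)) : ℕ :=
  sInf {d | ∃ f : MvPolynomial (Fin n) K, ∃ p ∈ Ass I, f.IsHomogeneous d ∧
    I.colon (Ideal.span {f}) = p}

/-- `α(J)`: the least degree of a nonzero element of `J`. -/
noncomputable def alphaNum {K : Type*} [Field K] {n : ℕ}
    (J : Ideal (MvPolynomial (Fin n) K)) : ℕ :=
  sInf {d | ∃ f ∈ J, f ≠ 0 ∧ f.totalDegree = d}

/-- `c(I) = max{α(p) : p ∈ Ass(I)}`. -/
noncomputable def cNum {K : Type*} [Field K] {n : ℕ}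
    (I : Ideal (MvPolynomial (Fin n) K)) : ℕ :=
  sSup (alphaNum '' Ass I)

/-- The set of minimal monomial generators of a monomial ideal: exponent vectors `s`
with `x^s ∈ I` such that no proper monomial divisor of `x^s` lies in `I`. -/
def minMonGens {K : Type*} [Field K] {n : ℕ}
    (I : Ideal (MvPolynomial (Fin n) K)) : Set (Fin n →₀ ℕ) :=
  {s | (monomial s (1 : K) : MvPolynomial (Fin n) K) ∈ I ∧
    ∀ t : Fin n →₀ ℕ, (monomial t (1 : K) : MvPolynomial (Fin n) K) ∈ I → t ≤ s → t = s}

/-- Vertex splittable monomial ideals (Moradi–Khosh-Ahang):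
(1) `(0)`, `(1)` and principal monomial ideals are vertex splittable;
(2) if there are a variable `x` and vertex splittable ideals `I₁`, `I₂` generated by
monomials not involving `x` with `I₂ ⊆ I₁`, `I = x·I₁ + I₂` and
`G(I) = G(x·I₁) ⊔ G(I₂)` (a disjoint union), then `I` is vertex splittable. -/
inductive IsVertexSplittable {K : Type*} [Field K] {n : ℕ} :
    Ideal (MvPolynomial (Fin n) K) → Prop
  | principal (s : Fin n →₀ ℕ) :
      IsVertexSplittable (Ideal.span {(monomial s (1 : K) : MvPolynomial (Fin n) K)})
  | bot : IsVertexSplittable ⊥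
  | top : IsVertexSplittable ⊤
  | split (x : Fin n) (I I1 I2 : Ideal (MvPolynomial (Fin n) K))
      (h1 : IsVertexSplittable I1) (h2 : IsVertexSplittable I2)
      (hgen1 : ∃ G1 : Set (Fin n →₀ ℕ), (∀ s ∈ G1, s x = 0) ∧
        I1 = Ideal.span ((fun s => (monomial s (1 : K) : MvPolynomial (Fin n) K)) '' G1))
      (hgen2 : ∃ G2 : Set (Fin n →₀ ℕ), (∀ s ∈ G2, s x = 0) ∧
        I2 = Ideal.span ((fun s => (monomial s (1 : K) : MvPolynomial (Fin n) K)) '' G2))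
      (hsub : I2 ≤ I1)
      (hI : I = Ideal.span {(X x : MvPolynomial (Fin n) K)} * I1 + I2)
      (hunion : minMonGens I =
        minMonGens (Ideal.span {(X x : MvPolynomial (Fin n) K)} * I1) ∪ minMonGens I2)
      (hdisj : Disjoint
        (minMonGens (Ideal.span {(X x : MvPolynomial (Fin n) K)} * I1)) (minMonGens I2)) :
      IsVertexSplittable I

namespace VS

variable {K : Type*} [Field K] {n : ℕ}

/-- monomial with coefficient 1 -/
noncomputable abbrev mon (s : Fin n →₀ ℕ) : MvPolynomial (Fin n) K := monomial s 1

/-- degree of an exponent vector -/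
noncomputable def deg (s : Fin n →₀ ℕ) : ℕ := s.degree

lemma deg_sum_eq (s : Fin n →₀ ℕ) : (s.sum fun _ e => e) = deg s := by
  simp [deg, Finsupp.degree_apply, Finsupp.sum]

lemma deg_add (a b : Fin n →₀ ℕ) : deg (a + b) = deg a + deg b := by
  simp [deg, Finsupp.degree_eq_weight_one, map_add]

lemma deg_nsmul (k : ℕ) (a : Fin n →₀ ℕ) : deg (k • a) = k * deg a := by
  induction k with
  | zero => simp [deg, Finsupp.degree_eq_weight_one]
  | succ m ih => rw [succ_nsmul, deg_add, ih]; ring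

lemma deg_single (i : Fin n) (m : ℕ) : deg (Finsupp.single i m) = m := by
  classical
  rcases eq_or_ne m 0 with rfl | hm
  · simp [deg, Finsupp.degree_eq_weight_one]
  · simp [deg, Finsupp.degree_apply, Finsupp.support_single_ne_zero i hm]

lemma deg_eq_zero_iff (s : Fin n →₀ ℕ) : deg s = 0 ↔ s = 0 := Finsupp.degree_eq_zero_iff s

lemma support_mon (s : Fin n →₀ ℕ) : (mon (K := K) s).support = {s} := by
  classical
  simp [mon, support_monomial]

/-- the "upper set" ideal of a set of exponents -/
def upIdeal (G : Set (Fin n →₀ ℕ)) : Ideal (MvPolynomial (Fin n) K) where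
  carrier := {f | ∀ t ∈ f.support, ∃ s ∈ G, s ≤ t}
  zero_mem' := by simp
  add_mem' := by
    classical
    intro f g hf hg t ht
    rcases Finset.mem_union.1 (MvPolynomial.support_add ht) with h | h
    · exact hf t h
    · exact hg t h
  smul_mem' := by
    classical
    intro c f hf t ht
    have h := MvPolynomial.support_mul c f ht
    rcases Finset.mem_add.1 h with ⟨u, _, w, hw, huw⟩
    obtain ⟨s, hs, hsw⟩ := hf w hw
    exact ⟨s, hs, le_trans (le_trans hsw le_add_self) (le_of_eq huw)⟩

lemma mem_span_mon_iff (G : Set (Fin n →₀ ℕ)) (f : MvPolynomial (Fin n) K) :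
    f ∈ Ideal.span (mon '' G) ↔ ∀ t ∈ f.support, ∃ s ∈ G, s ≤ t := by
  constructor
  · intro hf
    have : Ideal.span (mon '' G) ≤ upIdeal (K := K) G := by
      rw [Ideal.span_le]
      rintro _ ⟨s, hs, rfl⟩
      intro t ht
      rw [support_mon, Finset.mem_singleton] at ht
      exact ⟨s, hs, le_of_eq ht.symm⟩
    exact this hf
  · intro hf
    rw [← MvPolynomial.support_sum_monomial_coeff f]
    refine Ideal.sum_mem _ ?_
    intro t ht
    obtain ⟨s, hs, hst⟩ := hf t ht
    have : (monomial t) (coeff t f) = monomial (t - s) (coeff t f) * mon s := by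
      rw [mon, monomial_mul, mul_one, tsub_add_cancel_of_le hst]
    rw [this]
    exact Ideal.mul_mem_left _ _ (Ideal.subset_span ⟨s, hs, rfl⟩)

lemma mon_mem_span_iff (G : Set (Fin n →₀ ℕ)) (t : Fin n →₀ ℕ) :
    mon (K := K) t ∈ Ideal.span (mon '' G) ↔ ∃ s ∈ G, s ≤ t := by
  rw [mem_span_mon_iff, support_mon]
  constructor
  · intro h; exact h t (Finset.mem_singleton_self t)
  · rintro h u hu; rw [Finset.mem_singleton] at hu; exact hu ▸ h

lemma span_mon_mul_span_mon (G H : Set (Fin n →₀ ℕ)) :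
    Ideal.span (mon (K := K) '' G) * Ideal.span (mon '' H) =
      Ideal.span (mon '' Set.image2 (· + ·) G H) := by
  rw [Ideal.span_mul_span]
  congr 1
  ext f
  constructor
  · intro hf
    rw [Set.mem_mul] at hf
    obtain ⟨g, ⟨a, ha, rfl⟩, h, ⟨b, hb, rfl⟩, hf⟩ := hf
    subst hf
    exact ⟨a + b, Set.mem_image2_of_mem ha hb, by
      show mon (a + b) = mon a * mon b; rw [mon, mon, monomial_mul, one_mul]⟩
  · rintro ⟨c, ⟨a, ha, b, hb, rfl⟩, rfl⟩
    simp only [Set.mem_iUnion]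
    exact ⟨mon a, ⟨a, ha, rfl⟩, mon b, ⟨b, hb, rfl⟩, by
      show mon a * mon b = mon (a + b); rw [mon, mon, monomial_mul, one_mul]⟩

/-- k-fold sumsets -/
def sumPow (G : Set (Fin n →₀ ℕ)) : ℕ → Set (Fin n →₀ ℕ)
  | 0 => {0}
  | k + 1 => Set.image2 (· + ·) G (sumPow G k)

lemma span_mon_pow (G : Set (Fin n →₀ ℕ)) (k : ℕ) :
    Ideal.span (mon (K := K) '' G) ^ k = Ideal.span (mon '' sumPow G k) := by
  induction k with
  | zero =>
      have : mon (K := K) '' sumPow G 0 = {1} := by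
        simp only [sumPow, Set.image_singleton]
        congr 1
      rw [pow_zero, this, Ideal.span_singleton_one, Ideal.one_eq_top]
  | succ m ih =>
      rw [pow_succ', ih, span_mon_mul_span_mon]
      rfl


lemma deg_mono {a b : Fin n →₀ ℕ} (h : a ≤ b) : deg a ≤ deg b := by
  have h1 : a + (b - a) = b := add_tsub_cancel_of_le h
  calc deg a ≤ deg a + deg (b - a) := Nat.le_add_right _ _
  _ = deg b := by rw [← deg_add, h1]

lemma sumPow_mono {G G' : Set (Fin n →₀ ℕ)} (h : G ⊆ G') (k : ℕ) :
    sumPow G k ⊆ sumPow G' k := by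
  induction k with
  | zero => exact le_refl _
  | succ m ih =>
      rintro _ ⟨a, ha, b, hb, rfl⟩
      exact ⟨a, h ha, b, ih hb, rfl⟩

lemma add_mem_sumPow {G : Set (Fin n →₀ ℕ)} {s t : Fin n →₀ ℕ} {a b : ℕ}
    (hs : s ∈ sumPow G a) (ht : t ∈ sumPow G b) : s + t ∈ sumPow G (a + b) := by
  induction a generalizing s with
  | zero =>
      simp only [sumPow, Set.mem_singleton_iff] at hs
      subst hs
      rw [zero_add, zero_add]
      exact ht
  | succ m ih =>
      obtain ⟨g, hg, w, hw, rfl⟩ := hs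
      have h2 : w + t ∈ sumPow G (m + b) := ih hw
      have he : (m + 1) + b = (m + b) + 1 := by omega
      rw [he]
      exact ⟨g, hg, w + t, h2, (add_assoc g w t).symm⟩

lemma sumPow_dominate {G G' : Set (Fin n →₀ ℕ)} (h : ∀ g ∈ G, ∃ g' ∈ G', g' ≤ g) (k : ℕ) :
    ∀ s ∈ sumPow G k, ∃ s' ∈ sumPow G' k, s' ≤ s := by
  induction k with
  | zero => intro s hs; exact ⟨s, hs, le_refl s⟩
  | succ m ih =>
      rintro _ ⟨a, ha, b, hb, rfl⟩
      obtain ⟨a', ha', haa⟩ := h a ha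
      obtain ⟨b', hb', hbb⟩ := ih b hb
      exact ⟨a' + b', ⟨a', ha', b', hb', rfl⟩, add_le_add haa hbb⟩

lemma sumPow_addweight {G : Set (Fin n →₀ ℕ)} (w : (Fin n →₀ ℕ) → ℕ)
    (hw : ∀ a b, w (a + b) = w a + w b) {c : ℕ} (h1 : ∀ g ∈ G, w g = c) (k : ℕ) :
    ∀ s ∈ sumPow G k, w s = c * k := by
  induction k with
  | zero =>
      intro s hs
      simp only [sumPow, Set.mem_singleton_iff] at hs
      subst hs
      have : w 0 = 0 := by
        have := hw 0 0
        simpa using this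
      simp [this]
  | succ m ih =>
      rintro _ ⟨a, ha, b, hb, rfl⟩
      rw [hw, h1 a ha, ih b hb]
      ring

lemma sumPow_apply_zero {G : Set (Fin n →₀ ℕ)} {x : Fin n} (h : ∀ g ∈ G, g x = 0) (k : ℕ) :
    ∀ s ∈ sumPow G k, s x = 0 := by
  induction k with
  | zero =>
      intro s hs; simp only [sumPow, Set.mem_singleton_iff] at hs; subst hs; rfl
  | succ m ih =>
      rintro _ ⟨a, ha, b, hb, rfl⟩
      simp [Finsupp.add_apply, h a ha, ih b hb]

lemma sumPow_translate_mem {G G₁ : Set (Fin n →₀ ℕ)} {e : Fin n →₀ ℕ}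
    (h : ∀ g ∈ G₁, e + g ∈ G) (k : ℕ) :
    ∀ s ∈ sumPow G₁ k, k • e + s ∈ sumPow G k := by
  induction k with
  | zero =>
      intro s hs; simp only [sumPow, Set.mem_singleton_iff] at hs; subst hs
      simp [sumPow]
  | succ m ih =>
      rintro _ ⟨a, ha, b, hb, rfl⟩
      have key : (m + 1) • e + (a + b) = (e + a) + (m • e + b) := by
        rw [succ_nsmul]; abel
      rw [key]
      exact ⟨e + a, h a ha, m • e + b, ih b hb, rfl⟩

lemma single_mem_sumPow {G : Set (Fin n →₀ ℕ)} {x : Fin n}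
    (h : Finsupp.single x 1 ∈ G) (k : ℕ) : Finsupp.single x k ∈ sumPow G k := by
  induction k with
  | zero => simp [sumPow]
  | succ m ih =>
      have : Finsupp.single x (m + 1) = Finsupp.single x 1 + Finsupp.single x m := by
        rw [← Finsupp.single_add]; ring_nf
      rw [this]
      exact ⟨_, h, _, ih, rfl⟩

lemma sumPow_singleton (s : Fin n →₀ ℕ) (k : ℕ) : sumPow {s} k = {k • s} := by
  induction k with
  | zero => simp [sumPow]
  | succ m ih =>
      rw [sumPow, ih, Set.image2_singleton_left, Set.image_singleton, succ_nsmul]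
      congr 1
      abel
lemma minMonGens_subset {I : Ideal (MvPolynomial (Fin n) K)} {G : Set (Fin n →₀ ℕ)}
    (hI : I = Ideal.span (mon '' G)) : minMonGens I ⊆ G := by
  intro s hs
  obtain ⟨g, hg, hgs⟩ := (mon_mem_span_iff G s).1 (hI ▸ hs.1)
  have : g = s := hs.2 g (hI ▸ (mon_mem_span_iff G g).2 ⟨g, hg, le_refl g⟩) hgs
  exact this ▸ hg

lemma span_minMonGens {I : Ideal (MvPolynomial (Fin n) K)} {G : Set (Fin n →₀ ℕ)}
    (hI : I = Ideal.span (mon '' G)) : I = Ideal.span (mon '' minMonGens I) := by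
  have wf : WellFounded ((· < ·) : (Fin n →₀ ℕ) → (Fin n →₀ ℕ) → Prop) :=
    (Finsupp.wellFoundedLT (fun m => Nat.not_lt_zero m)).wf
  apply le_antisymm
  · have h2 : Ideal.span (mon (K := K) '' G) ≤ Ideal.span (mon '' minMonGens I) := by
      rw [Ideal.span_le]
      rintro _ ⟨g, hg, rfl⟩
      have hgI : mon (K := K) g ∈ I := hI ▸ (mon_mem_span_iff G g).2 ⟨g, hg, le_refl g⟩
      obtain ⟨t₀, ht₀, hmin⟩ := wf.has_min
        {t : Fin n →₀ ℕ | t ≤ g ∧ (monomial t (1:K) : MvPolynomial (Fin n) K) ∈ I}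
        ⟨g, le_refl g, hgI⟩
      have ht₀MG : t₀ ∈ minMonGens I := by
        refine ⟨ht₀.2, fun t htI hle => ?_⟩
        by_contra hne
        have hlt : t < t₀ := lt_of_le_of_ne hle hne
        exact hmin t ⟨le_trans hle ht₀.1, htI⟩ hlt
      exact (mon_mem_span_iff (K := K) (minMonGens I) g).2 ⟨t₀, ht₀MG, ht₀.1⟩
    calc I = Ideal.span (mon '' G) := hI
    _ ≤ _ := h2
  · rw [Ideal.span_le]
    rintro _ ⟨s, hs, rfl⟩
    exact hs.1

lemma minMonGens_nonempty {I : Ideal (MvPolynomial (Fin n) K)} {G : Set (Fin n →₀ ℕ)}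
    (hI : I = Ideal.span (mon '' G)) (hne : I ≠ ⊥) : (minMonGens I).Nonempty := by
  by_contra h
  rw [Set.not_nonempty_iff_eq_empty] at h
  apply hne
  rw [span_minMonGens hI, h]
  simp [Ideal.span_eq_bot]

lemma minMonGens_principal (s : Fin n →₀ ℕ) :
    minMonGens (Ideal.span {(monomial s (1 : K) : MvPolynomial (Fin n) K)}) = {s} := by
  have hset : ({(monomial s (1 : K) : MvPolynomial (Fin n) K)} : Set _) = mon '' {s} := by
    simp [mon]
  ext t
  constructor
  · intro ht
    obtain ⟨g, hg, hgt⟩ := (mon_mem_span_iff {s} t).1 (by rw [← hset]; exact ht.1)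
    rw [Set.mem_singleton_iff] at hg; rw [hg] at hgt
    have : s = t := ht.2 s (by rw [hset]; exact (mon_mem_span_iff {s} s).2 ⟨s, rfl, le_refl s⟩) hgt
    exact this ▸ rfl
  · intro ht
    rw [Set.mem_singleton_iff] at ht; subst ht
    constructor
    · rw [hset]; exact (mon_mem_span_iff {t} t).2 ⟨t, rfl, le_refl t⟩
    · intro u hu hut
      obtain ⟨g, hg, hgu⟩ := (mon_mem_span_iff {t} u).1 (by rw [← hset]; exact hu)
      rw [Set.mem_singleton_iff] at hg; subst hg
      exact le_antisymm hut hgu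
/-- ideal of polynomials all of whose monomials have degree ≥ a -/
def lowDeg (a : ℕ) : Ideal (MvPolynomial (Fin n) K) where
  carrier := {f | ∀ t ∈ f.support, a ≤ deg t}
  zero_mem' := by simp
  add_mem' := by
    classical
    intro f g hf hg t ht
    rcases Finset.mem_union.1 (MvPolynomial.support_add ht) with h | h
    · exact hf t h
    · exact hg t h
  smul_mem' := by
    classical
    intro c f hf t ht
    rcases Finset.mem_add.1 (MvPolynomial.support_mul c f ht) with ⟨u, _, w, hw, huw⟩
    calc a ≤ deg w := hf w hw
    _ ≤ deg u + deg w := le_add_self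
    _ = deg t := by rw [← deg_add, huw]

lemma mul_mem_lowDeg {a b : ℕ} {f g : MvPolynomial (Fin n) K}
    (hf : f ∈ lowDeg a) (hg : g ∈ lowDeg b) : f * g ∈ lowDeg (a + b) := by
  classical
  intro t ht
  rcases Finset.mem_add.1 (MvPolynomial.support_mul f g ht) with ⟨u, hu, w, hw, huw⟩
  calc a + b ≤ deg u + deg w := add_le_add (hf u hu) (hg w hw)
  _ = deg t := by rw [← deg_add, huw]

lemma pow_le_lowDeg {I : Ideal (MvPolynomial (Fin n) K)} {a : ℕ}
    (hI : I ≤ lowDeg a) {k : ℕ} (hk : 1 ≤ k) : I ^ k ≤ lowDeg (a * k) := by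
  induction k with
  | zero => omega
  | succ m ih =>
      rcases Nat.eq_or_lt_of_le hk with h | h
      · rw [← h, pow_one, mul_one]; exact hI
      · have hm : 1 ≤ m := by omega
        rw [pow_succ, mul_add, mul_one]
        rw [Ideal.mul_le]
        intro r hr s hs
        exact mul_mem_lowDeg (ih hm hr) (hI hs)

/-- span of variables indexed by A -/
noncomputable def PA (A : Set (Fin n)) : Ideal (MvPolynomial (Fin n) K) :=
  Ideal.span ((fun i => (X i : MvPolynomial (Fin n) K)) '' A)

lemma PA_eq_span_mon (A : Set (Fin n)) :
    PA (K := K) A = Ideal.span (mon '' ((fun i => Finsupp.single i 1) '' A)) := by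
  rw [PA, ← Set.image_comp]
  rfl

lemma mem_PA_iff (A : Set (Fin n)) (f : MvPolynomial (Fin n) K) :
    f ∈ PA (K := K) A ↔ ∀ t ∈ f.support, ∃ i ∈ A, 1 ≤ t i := by
  rw [PA_eq_span_mon, mem_span_mon_iff]
  constructor
  · intro h t ht
    obtain ⟨s, ⟨i, hi, rfl⟩, hst⟩ := h t ht
    exact ⟨i, hi, (Finsupp.single_le_iff).1 hst⟩
  · intro h t ht
    obtain ⟨i, hi, hit⟩ := h t ht
    exact ⟨Finsupp.single i 1, ⟨i, hi, rfl⟩, Finsupp.single_le_iff.2 hit⟩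

lemma PA_isPrime (A : Set (Fin n)) : (PA (K := K) A).IsPrime := by
  classical
  set φ : MvPolynomial (Fin n) K →ₐ[K] MvPolynomial (Fin n) K :=
    aeval (fun i => if i ∈ A then 0 else X i) with hφ
  have key : ∀ f : MvPolynomial (Fin n) K, f - φ f ∈ PA (K := K) A := by
    intro f
    induction f using MvPolynomial.induction_on with
    | C a => simp [hφ, aeval_C, algebraMap_eq]
    | add f g hf hg =>
        have : f + g - φ (f + g) = (f - φ f) + (g - φ g) := by rw [map_add]; ring
        rw [this]; exact Ideal.add_mem _ hf hg
    | mul_X f i hf =>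
        rw [map_mul, aeval_X]
        by_cases hi : i ∈ A
        · rw [if_pos hi, mul_zero, sub_zero]
          exact Ideal.mul_mem_left _ _ (Ideal.subset_span ⟨i, hi, rfl⟩)
        · rw [if_neg hi]
          have : f * X i - φ f * X i = (f - φ f) * X i := by ring
          rw [this]
          exact Ideal.mul_mem_right _ _ hf
  have hker : PA (K := K) A = RingHom.ker (φ : MvPolynomial (Fin n) K →+* MvPolynomial (Fin n) K) := by
    apply le_antisymm
    · rw [PA, Ideal.span_le]
      rintro _ ⟨i, hi, rfl⟩
      simp only [SetLike.mem_coe, RingHom.mem_ker, AlgHom.coe_toRingHom]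
      rw [hφ]
      simp [aeval_X, if_pos hi]
    · intro f hf
      rw [RingHom.mem_ker] at hf
      have h2 := key f
      rw [show (φ : MvPolynomial (Fin n) K →+* MvPolynomial (Fin n) K) f = φ f from rfl] at hf
      rw [hf, sub_zero] at h2
      exact h2
  rw [hker]
  exact RingHom.ker_isPrime _

lemma exists_X_mem {p : Ideal (MvPolynomial (Fin n) K)} (hp : p.IsPrime) {u : Fin n →₀ ℕ}
    (hu : u ≠ 0) (h : mon (K := K) u ∈ p) : ∃ i, (X i : MvPolynomial (Fin n) K) ∈ p := by
  classical
  rw [mon, monomial_eq, map_one, one_mul] at h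
  have hprod : ∀ (s : Finset (Fin n)), (∏ i ∈ s, (X i : MvPolynomial (Fin n) K) ^ u i) ∈ p →
      s.Nonempty → ∃ i ∈ s, (X i : MvPolynomial (Fin n) K) ^ u i ∈ p := by
    intro s
    induction s using Finset.induction_on with
    | empty => intro _ hne; simp at hne
    | @insert a s' hx ih =>
        intro hmem _
        rw [Finset.prod_insert hx] at hmem
        rcases hp.mem_or_mem hmem with h1 | h2
        · exact ⟨a, Finset.mem_insert_self a s', h1⟩
        · rcases s'.eq_empty_or_nonempty with rfl | hne
          · rw [Finset.prod_empty] at h2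
            exact absurd ((Ideal.eq_top_iff_one p).2 h2) hp.ne_top
          · obtain ⟨i, hi, hip⟩ := ih h2 hne
            exact ⟨i, Finset.mem_insert_of_mem hi, hip⟩
  have hne : u.support.Nonempty := Finsupp.support_nonempty_iff.2 hu
  have h' : (∏ i ∈ u.support, (X i : MvPolynomial (Fin n) K) ^ u i) ∈ p := by
    rw [Finsupp.prod] at h; exact h
  obtain ⟨i, hi, hip⟩ := hprod u.support h' hne
  exact ⟨i, hp.mem_of_pow_mem _ hip⟩


lemma mem_lowDeg_iff (a : ℕ) (f : MvPolynomial (Fin n) K) :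
    f ∈ lowDeg (K := K) (n := n) a ↔ ∀ t ∈ f.support, a ≤ deg t := Iff.rfl

lemma span_X_mul {x : Fin n} {I1 : Ideal (MvPolynomial (Fin n) K)} {G1 : Set (Fin n →₀ ℕ)}
    (hI1 : I1 = Ideal.span (mon '' G1)) :
    Ideal.span {(X x : MvPolynomial (Fin n) K)} * I1 =
      Ideal.span (mon '' ((fun s => Finsupp.single x 1 + s) '' G1)) := by
  have h1 : ({(X x : MvPolynomial (Fin n) K)} : Set _) = mon '' {Finsupp.single x 1} := by
    rw [Set.image_singleton]; rfl
  rw [hI1, h1, span_mon_mul_span_mon, Set.image2_singleton_left]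

lemma minMonGens_X_mul {x : Fin n} {I1 : Ideal (MvPolynomial (Fin n) K)} {G1 : Set (Fin n →₀ ℕ)}
    (hx1 : ∀ s ∈ G1, s x = 0) (hI1 : I1 = Ideal.span (mon '' G1)) :
    minMonGens (Ideal.span {(X x : MvPolynomial (Fin n) K)} * I1) =
      (fun s => Finsupp.single x 1 + s) '' minMonGens I1 := by
  set ex : Fin n →₀ ℕ := Finsupp.single x 1 with hex
  have hchar : ∀ t : Fin n →₀ ℕ,
      (monomial t (1 : K) : MvPolynomial (Fin n) K) ∈
        Ideal.span {(X x : MvPolynomial (Fin n) K)} * I1 ↔ ∃ g ∈ G1, ex + g ≤ t := by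
    intro t
    rw [span_X_mul hI1]
    rw [show (monomial t (1:K) : MvPolynomial (Fin n) K) = mon t from rfl, mon_mem_span_iff]
    constructor
    · rintro ⟨_, ⟨g, hg, rfl⟩, h⟩; exact ⟨g, hg, h⟩
    · rintro ⟨g, hg, h⟩; exact ⟨ex + g, ⟨g, hg, rfl⟩, h⟩
  have hchar1 : ∀ t : Fin n →₀ ℕ,
      (monomial t (1 : K) : MvPolynomial (Fin n) K) ∈ I1 ↔ ∃ g ∈ G1, g ≤ t := by
    intro t
    rw [hI1, show (monomial t (1:K) : MvPolynomial (Fin n) K) = mon t from rfl, mon_mem_span_iff]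
  ext t
  constructor
  · rintro ⟨htmem, htmin⟩
    obtain ⟨g, hg, hgt⟩ := (hchar t).1 htmem
    have hteq : t = ex + g := (htmin (ex + g) ((hchar _).2 ⟨g, hg, le_refl _⟩) hgt).symm
    refine ⟨g, ⟨(hchar1 g).2 ⟨g, hg, le_refl g⟩, ?_⟩, hteq.symm⟩
    intro g' hg' hg'g
    have h1 : (monomial (ex + g') (1:K) : MvPolynomial (Fin n) K) ∈
        Ideal.span {(X x : MvPolynomial (Fin n) K)} * I1 := by
      obtain ⟨h, hh, hhg'⟩ := (hchar1 g').1 hg'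
      exact (hchar _).2 ⟨h, hh, add_le_add_right hhg' ex⟩
    have h2 : ex + g' ≤ t := hteq ▸ add_le_add_right hg'g ex
    have := htmin (ex + g') h1 h2
    rw [hteq] at this
    exact add_left_cancel this
  · rintro ⟨s, ⟨hsmem, hsmin⟩, rfl⟩
    have hsG1 : s ∈ G1 := minMonGens_subset hI1 ⟨hsmem, hsmin⟩
    refine ⟨(hchar _).2 ⟨s, hsG1, le_refl _⟩, ?_⟩
    intro t htmem htle
    obtain ⟨g, hg, hgt⟩ := (hchar t).1 htmem
    have hext : ex ≤ t := le_trans le_self_add hgt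
    have hteq : ex + (t - ex) = t := add_tsub_cancel_of_le hext
    set t' := t - ex with ht'
    have hgt' : g ≤ t' := by
      rw [Finsupp.le_def]
      intro j
      rcases eq_or_ne j x with rfl | hj
      · rw [hx1 g hg]; exact Nat.zero_le _
      · have h1 : g j ≤ t j := by
          have := Finsupp.le_def.1 hgt j
          rwa [Finsupp.add_apply, hex, Finsupp.single_eq_of_ne' (Ne.symm hj), zero_add] at this
        rw [ht', Finsupp.tsub_apply, hex, Finsupp.single_eq_of_ne' (Ne.symm hj), Nat.sub_zero]
        exact h1
    have ht's : t' ≤ s := by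
      rw [Finsupp.le_def]
      intro j
      rcases eq_or_ne j x with rfl | hj
      · have h1 : t j ≤ 1 := by
          have := Finsupp.le_def.1 htle j
          rwa [Finsupp.add_apply, hex, Finsupp.single_eq_same, hx1 s hsG1, add_zero] at this
        rw [ht', Finsupp.tsub_apply, hex, Finsupp.single_eq_same]
        omega
      · have := Finsupp.le_def.1 htle j
        rw [Finsupp.add_apply, hex, Finsupp.single_eq_of_ne' (Ne.symm hj), zero_add] at this
        rw [ht', Finsupp.tsub_apply, hex, Finsupp.single_eq_of_ne' (Ne.symm hj), Nat.sub_zero]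
        exact this
    have h2 : t' = s := hsmin t' ((hchar1 t').2 ⟨g, hg, hgt'⟩) ht's
    rw [← hteq, h2]
/-- colon of a monomial ideal by a monomial, membership characterisation -/
lemma mem_colon_span_mon (G : Set (Fin n →₀ ℕ)) (v : Fin n →₀ ℕ) (f : MvPolynomial (Fin n) K) :
    f ∈ (Ideal.span (mon '' G)).colon (Ideal.span {mon (K := K) v}) ↔
      ∀ t ∈ f.support, ∃ s ∈ G, s ≤ t + v := by
  rw [Ideal.mem_colon_span_singleton, mem_span_mon_iff]
  constructor
  · intro h t ht
    have hc : coeff (t + v) (f * mon v) = coeff t f := by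
      rw [mon, coeff_mul_monomial', if_pos le_add_self, mul_one, add_tsub_cancel_right]
    have : t + v ∈ (f * mon (K := K) v).support := by
      rw [mem_support_iff, hc]
      exact mem_support_iff.1 ht
    exact h (t + v) this
  · intro h t ht
    rw [mem_support_iff, mon, coeff_mul_monomial'] at ht
    by_cases hv : v ≤ t
    · rw [if_pos hv, mul_one] at ht
      obtain ⟨s, hs, hst⟩ := h (t - v) (mem_support_iff.2 ht)
      exact ⟨s, hs, le_trans hst (le_of_eq (tsub_add_cancel_of_le hv))⟩
    · rw [if_neg hv] at ht; exact absurd rfl ht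

/-- the colon ideal (I : f) is the annihilator of the class of f in S/I -/
lemma mem_Ass_of_colon_prime {I : Ideal (MvPolynomial (Fin n) K)} {f : MvPolynomial (Fin n) K}
    (hp : (I.colon (Ideal.span {f})).IsPrime) :
    I.colon (Ideal.span {f}) ∈
      associatedPrimes (MvPolynomial (Fin n) K) (MvPolynomial (Fin n) K ⧸ I) := by
  refine ⟨hp, Submodule.Quotient.mk f, ?_⟩
  have heq : (⊥ : Submodule (MvPolynomial (Fin n) K) (MvPolynomial (Fin n) K ⧸ I)).colon
      {Submodule.Quotient.mk f} = I.colon (Ideal.span {f}) := by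
    ext r
    rw [Submodule.mem_colon_singleton, Ideal.mem_colon_span_singleton, Submodule.mem_bot,
      ← Submodule.Quotient.mk_smul, smul_eq_mul, Submodule.Quotient.mk_eq_zero]
  rw [heq, hp.radical]

lemma deg_eq_one_classify {s : Fin n →₀ ℕ} (h : deg s = 1) : ∃ i, s = Finsupp.single i 1 := by
  classical
  have hs0 : s ≠ 0 := by
    intro h0; rw [h0] at h; simp [deg, Finsupp.degree] at h
  obtain ⟨i, hi⟩ := Finsupp.support_nonempty_iff.2 hs0
  have hkey : s i + ∑ j ∈ s.support.erase i, s j = 1 := by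
    rw [Finset.add_sum_erase _ _ hi]
    exact h
  have hi1 : 1 ≤ s i := Nat.one_le_iff_ne_zero.2 (Finsupp.mem_support_iff.1 hi)
  have hsum0 : ∑ j ∈ s.support.erase i, s j = 0 := by omega
  have hsi : s i = 1 := by omega
  refine ⟨i, ?_⟩
  ext j
  rcases eq_or_ne j i with rfl | hji
  · rw [hsi, Finsupp.single_eq_same]
  · rw [Finsupp.single_eq_of_ne' (Ne.symm hji)]
    by_contra hj
    have hj' : j ∈ s.support.erase i := Finset.mem_erase.2 ⟨hji, Finsupp.mem_support_iff.2 hj⟩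
    have := Finset.sum_eq_zero_iff.1 hsum0 j hj'
    exact hj this

/-- weight of A-coordinates -/
noncomputable def wA (A : Set (Fin n)) (t : Fin n →₀ ℕ) : ℕ :=
  ∑ i : Fin n, A.indicator (fun j => t j) i

lemma wA_add (A : Set (Fin n)) (a b : Fin n →₀ ℕ) : wA A (a + b) = wA A a + wA A b := by
  classical
  rw [wA, wA, wA, ← Finset.sum_add_distrib]
  refine Finset.sum_congr rfl fun i _ => ?_
  simp only [Set.indicator_apply, Finsupp.add_apply]
  split_ifs <;> simp

lemma wA_mono (A : Set (Fin n)) {a b : Fin n →₀ ℕ} (h : a ≤ b) : wA A a ≤ wA A b := by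
  classical
  refine Finset.sum_le_sum fun i _ => ?_
  simp only [Set.indicator_apply]
  split_ifs
  · exact Finsupp.le_def.1 h i
  · exact le_refl 0

lemma wA_single (A : Set (Fin n)) (i : Fin n) (m : ℕ) :
    wA A (Finsupp.single i m) = A.indicator (fun _ => m) i := by
  classical
  rw [wA, Finset.sum_eq_single i]
  · simp [Set.indicator_apply]
  · intro j _ hji
    simp [Set.indicator_apply, Finsupp.single_eq_of_ne' (Ne.symm hji)]
  · intro h; exact absurd (Finset.mem_univ i) h

lemma wA_pos (A : Set (Fin n)) {t : Fin n →₀ ℕ} (h : 1 ≤ wA A t) : ∃ i ∈ A, 1 ≤ t i := by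
  classical
  by_contra hc
  push_neg at hc
  have hz : wA A t = 0 := by
    rw [wA]
    refine Finset.sum_eq_zero fun i _ => ?_
    simp only [Set.indicator_apply]
    split_ifs with hi
    · have := hc i hi; omega
    · rfl
  omega
theorem comb {I : Ideal (MvPolynomial (Fin n) K)} (hvs : IsVertexSplittable I) :
    I ≠ ⊤ → I ≠ ⊥ → ∀ α : ℕ, (∀ s ∈ minMonGens I, deg s = α) → ∀ k : ℕ, 1 ≤ k →
    ∃ (v : Fin n →₀ ℕ) (A : Set (Fin n)), deg v + 1 = α * k ∧
      ∀ t : Fin n →₀ ℕ, (∃ s ∈ sumPow (minMonGens I) k, s ≤ t + v) ↔ ∃ i ∈ A, 1 ≤ t i := by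
  induction hvs with
  | bot => intro _ hne; exact absurd rfl hne
  | top => intro hproper _; exact absurd rfl hproper
  | principal s =>
      intro hproper _ α hdeg k hk
      have hs0 : s ≠ 0 := by
        rintro rfl
        apply hproper
        have h1 : (monomial (0 : Fin n →₀ ℕ) (1 : K)) = (1 : MvPolynomial (Fin n) K) := by
          simp
        rw [h1, Ideal.span_singleton_one]
      have hMG := minMonGens_principal (K := K) s
      have hsα : deg s = α := hdeg s (by rw [hMG]; rfl)
      obtain ⟨i, hi⟩ := Finsupp.support_nonempty_iff.2 hs0
      have hsi : 1 ≤ s i := Nat.one_le_iff_ne_zero.2 (Finsupp.mem_support_iff.1 hi)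
      have hle : Finsupp.single i 1 ≤ k • s := by
        rw [Finsupp.single_le_iff, Finsupp.smul_apply, smul_eq_mul]
        exact Nat.one_le_iff_ne_zero.2 (Nat.mul_ne_zero (by omega) (by omega))
      set v := k • s - Finsupp.single i 1 with hv
      have hvE : v + Finsupp.single i 1 = k • s := tsub_add_cancel_of_le hle
      have hdv : deg v + 1 = α * k := by
        have h1 : deg (v + Finsupp.single i 1) = deg (k • s) := by rw [hvE]
        rw [deg_add, deg_single, deg_nsmul, hsα, mul_comm] at h1
        exact h1
      refine ⟨v, {i}, hdv, fun t => ?_⟩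
      rw [hMG, sumPow_singleton]
      constructor
      · rintro ⟨s', hs', hle'⟩
        rw [Set.mem_singleton_iff] at hs'
        subst hs'
        rw [← hvE, add_comm t v] at hle'
        have := (add_le_add_iff_left v).1 hle'
        exact ⟨i, rfl, Finsupp.single_le_iff.1 this⟩
      · rintro ⟨j, hj, htj⟩
        rw [Set.mem_singleton_iff] at hj
        subst hj
        refine ⟨k • s, rfl, ?_⟩
        rw [← hvE, add_comm t v]
        exact (add_le_add_iff_left v).2 (Finsupp.single_le_iff.2 htj)
  | split x I I1 I2 h1 h2 hgen1 hgen2 hsub hI hunion hdisj ih1 ih2 =>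
      intro hproper hne α hdeg k hk
      obtain ⟨G1, hx1, hI1span⟩ := hgen1
      by_cases hI1top : I1 = ⊤
      · -- I = P_B for a set of variables B ∋ x
        subst hI1top
        rw [Ideal.mul_top] at hunion
        have hXx : Ideal.span {(X x : MvPolynomial (Fin n) K)} =
            Ideal.span {(monomial (Finsupp.single x 1) (1 : K) : MvPolynomial (Fin n) K)} := rfl
        rw [hXx, minMonGens_principal] at hunion
        have hex_mem : Finsupp.single x 1 ∈ minMonGens I := by
          rw [hunion]; exact Or.inl rfl
        have hα : α = 1 := by
          have := hdeg _ hex_mem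
          rw [deg_single] at this
          omega
        set A : Set (Fin n) := {i | Finsupp.single i 1 ∈ minMonGens I} with hA
        have hclass : ∀ s ∈ minMonGens I, ∃ i ∈ A, s = Finsupp.single i 1 := by
          intro s hs
          have := hdeg s hs
          rw [hα] at this
          obtain ⟨i, rfl⟩ := deg_eq_one_classify this
          exact ⟨i, hs, rfl⟩
        have hxA : x ∈ A := hex_mem
        refine ⟨Finsupp.single x (k - 1), A, ?_, fun t => ?_⟩
        · rw [deg_single, hα, one_mul]; omega
        constructor
        · rintro ⟨s, hs, hst⟩
          have hw : wA A s = 1 * k := by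
            refine sumPow_addweight (wA A) (wA_add A) ?_ k s hs
            intro g hg
            obtain ⟨i, hiA, rfl⟩ := hclass g hg
            rw [wA_single, Set.indicator_of_mem hiA]
          have hmono := wA_mono A hst
          rw [wA_add, wA_single, Set.indicator_of_mem hxA] at hmono
          rw [hw, one_mul] at hmono
          exact wA_pos A (by omega)
        · rintro ⟨i, hiA, hti⟩
          have hmem1 : Finsupp.single i 1 ∈ sumPow (minMonGens I) 1 := by
            exact ⟨Finsupp.single i 1, hiA, 0, rfl, add_zero _⟩
          have hmem2 := single_mem_sumPow hex_mem (k - 1)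
          have hmem := add_mem_sumPow hmem1 hmem2
          rw [show 1 + (k - 1) = k by omega] at hmem
          refine ⟨_, hmem, ?_⟩
          exact add_le_add_left (Finsupp.single_le_iff.2 hti) _
      · -- main case
        have hI1ne : I1 ≠ ⊥ := by
          rintro rfl
          apply hne
          have h2' : I2 = ⊥ := le_bot_iff.1 hsub
          rw [hI, h2', Ideal.mul_bot]
          simp
        have hMGxI1 := minMonGens_X_mul (K := K) hx1 hI1span
        rw [hMGxI1] at hunion
        have hdeg1 : ∀ s ∈ minMonGens I1, deg s + 1 = α := by
          intro s hs
          have hmem : Finsupp.single x 1 + s ∈ minMonGens I := by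
            rw [hunion]; exact Or.inl ⟨s, hs, rfl⟩
          have := hdeg _ hmem
          rw [deg_add, deg_single] at this
          omega
        obtain ⟨s0, hs0⟩ := minMonGens_nonempty hI1span hI1ne
        have hα1 : 1 ≤ α := by have := hdeg1 s0 hs0; omega
        have ihdeg : ∀ s ∈ minMonGens I1, deg s = α - 1 := by
          intro s hs; have := hdeg1 s hs; omega
        obtain ⟨m, rfl⟩ : ∃ m, α = m + 1 := ⟨α - 1, by omega⟩
        simp only [Nat.add_sub_cancel] at ihdeg
        obtain ⟨v₁, A₁, hdv₁, hiff₁⟩ := ih1 hI1top hI1ne m ihdeg k hk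
        set ex : Fin n →₀ ℕ := Finsupp.single x 1 with hex
        have hsingle_smul : k • ex = Finsupp.single x k := by
          rw [hex, Finsupp.smul_single, smul_eq_mul, mul_one]
        refine ⟨Finsupp.single x k + v₁, A₁, ?_, fun t => ?_⟩
        · rw [deg_add, deg_single]
          have hmk : (m + 1) * k = m * k + k := Nat.succ_mul m k
          omega
        constructor
        · rintro ⟨s, hs, hst⟩
          have hdom : ∀ u ∈ minMonGens I, ∃ g ∈ minMonGens I1, g ≤ u := by
            intro u hu
            rw [hunion] at hu
            rcases hu with ⟨g, hg, rfl⟩ | hu2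
            · exact ⟨g, hg, le_add_self⟩
            · have hu1 : mon (K := K) u ∈ I1 := hsub hu2.1
              rw [span_minMonGens hI1span, mon_mem_span_iff] at hu1
              exact hu1
          obtain ⟨w, hw, hws⟩ := sumPow_dominate hdom k s hs
          have hwx : w x = 0 := by
            refine sumPow_apply_zero ?_ k w hw
            intro g hg
            exact hx1 g (minMonGens_subset hI1span hg)
          have hwtv₁ : w ≤ t + v₁ := by
            rw [Finsupp.le_def]
            intro j
            rcases eq_or_ne j x with rfl | hj
            · rw [hwx]; exact Nat.zero_le _
            · have h6 := Finsupp.le_def.1 (le_trans hws hst) j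
              rw [Finsupp.add_apply, Finsupp.add_apply,
                Finsupp.single_eq_of_ne' (Ne.symm hj)] at h6
              rw [Finsupp.add_apply]
              omega
          exact (hiff₁ t).1 ⟨w, hw, hwtv₁⟩
        · intro hex2
          obtain ⟨s₁, hs₁, hs₁le⟩ := (hiff₁ t).2 hex2
          have htrans : ∀ g ∈ minMonGens I1, ex + g ∈ minMonGens I := by
            intro g hg
            rw [hunion]
            exact Or.inl ⟨g, hg, rfl⟩
          have hmem := sumPow_translate_mem htrans k s₁ hs₁
          rw [hsingle_smul] at hmem
          refine ⟨_, hmem, ?_⟩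
          calc Finsupp.single x k + s₁ ≤ Finsupp.single x k + (t + v₁) :=
                add_le_add_right hs₁le _
          _ = t + (Finsupp.single x k + v₁) := by abel

end VS

open VS in
theorem stmt12 {K : Type*} [Field K] {n : ℕ}
    (I : Ideal (MvPolynomial (Fin n) K))
    (hvs : IsVertexSplittable I)
    (hproper : I ≠ ⊤) (hne : I ≠ ⊥)
    (hequi : ∃ G : Set (Fin n →₀ ℕ),
      (∀ s ∈ G, (s.sum fun _ e => e) = alphaNum I) ∧
      I = Ideal.span ((fun s => (monomial s (1 : K) : MvPolynomial (Fin n) K)) '' G)) :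
    ∀ k : ℕ, 1 ≤ k → (vNumber (I ^ k) : ℤ) = (alphaNum I : ℤ) * k - 1 := by
  intro k hk
  obtain ⟨G, hGdeg, hGspan⟩ := hequi
  set a := alphaNum I with ha
  have hGspan' : I = Ideal.span (mon '' G) := hGspan
  have hGdeg' : ∀ s ∈ G, deg s = a := fun s hs => by rw [← deg_sum_eq]; exact hGdeg s hs
  have hIMG : I = Ideal.span (mon '' minMonGens I) := span_minMonGens hGspan'
  have hMGsub := minMonGens_subset hGspan'
  have hdeg : ∀ s ∈ minMonGens I, deg s = a := fun s hs => hGdeg' s (hMGsub hs)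
  have hMGne : (minMonGens I).Nonempty := minMonGens_nonempty hGspan' hne
  have ha1 : 1 ≤ a := by
    by_contra h
    obtain ⟨s0, hs0⟩ := hMGne
    have h0 : deg s0 = 0 := by have := hdeg s0 hs0; omega
    rw [deg_eq_zero_iff] at h0
    subst h0
    apply hproper
    rw [Ideal.eq_top_iff_one]
    have h1 : (monomial (0 : Fin n →₀ ℕ) (1 : K)) = (1 : MvPolynomial (Fin n) K) := by simp
    exact h1 ▸ hs0.1
  obtain ⟨v, A, hdv, hiff⟩ := comb hvs hproper hne a hdeg k hk
  have hpow : I ^ k = Ideal.span (mon '' sumPow (minMonGens I) k) := by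
    have h2 := span_mon_pow (K := K) (minMonGens I) k
    rw [← hIMG] at h2
    exact h2
  set f : MvPolynomial (Fin n) K := mon v with hf
  have hcolon : (I ^ k).colon (Ideal.span {f}) = PA A := by
    ext g
    rw [hpow, hf, mem_colon_span_mon, mem_PA_iff]
    exact ⟨fun h t ht => (hiff t).1 (h t ht), fun h t ht => (hiff t).2 (h t ht)⟩
  have hIkprime : ((I ^ k).colon (Ideal.span {f})).IsPrime := by
    rw [hcolon]; exact PA_isPrime A
  have hAss : (I ^ k).colon (Ideal.span {f}) ∈ Ass (I ^ k) := mem_Ass_of_colon_prime hIkprime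
  set D := deg v with hD
  have hfhom : f.IsHomogeneous D := isHomogeneous_monomial 1 rfl
  have hub : D ∈ {d | ∃ f' : MvPolynomial (Fin n) K, ∃ p ∈ Ass (I ^ k), f'.IsHomogeneous d ∧
      (I ^ k).colon (Ideal.span {f'}) = p} :=
    ⟨f, (I ^ k).colon (Ideal.span {f}), hAss, hfhom, rfl⟩
  have hlow : I ^ k ≤ lowDeg (a * k) := by
    refine pow_le_lowDeg ?_ hk
    intro g hg
    rw [hIMG, mem_span_mon_iff] at hg
    rw [mem_lowDeg_iff]
    intro t ht
    obtain ⟨s, hs, hst⟩ := hg t ht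
    calc a = deg s := (hdeg s hs).symm
    _ ≤ deg t := deg_mono hst
  have hlb : ∀ d ∈ {d | ∃ f' : MvPolynomial (Fin n) K, ∃ p ∈ Ass (I ^ k), f'.IsHomogeneous d ∧
      (I ^ k).colon (Ideal.span {f'}) = p}, D ≤ d := by
    rintro d ⟨f', p, hpAss, hf', hcol⟩
    have hp : p.IsPrime := IsAssociatedPrime.isPrime hpAss
    have hf0 : f' ≠ 0 := by
      rintro rfl
      have hcb : (I ^ k).colon (Ideal.span {(0 : MvPolynomial (Fin n) K)}) = ⊤ := by
        rw [Ideal.eq_top_iff_one, Ideal.mem_colon_span_singleton]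
        simp
      rw [hcb] at hcol
      exact hp.ne_top hcol.symm
    have hsubp : I ^ k ≤ p := by
      intro g hg
      rw [← hcol, Ideal.mem_colon_span_singleton]
      exact Ideal.mul_mem_right f' _ hg
    obtain ⟨s0, hs0⟩ := hMGne
    have hpowmem : mon (K := K) (k • s0) ∈ p := by
      have h1 : (mon (K := K) s0) ^ k ∈ I ^ k := Ideal.pow_mem_pow hs0.1 k
      have h2 : (mon (K := K) s0) ^ k = mon (k • s0) := by
        rw [mon, monomial_pow, one_pow]
      exact hsubp (h2 ▸ h1)
    have hks0 : k • s0 ≠ 0 := by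
      intro h0
      have hz : deg (k • s0) = 0 := by rw [h0]; exact (deg_eq_zero_iff 0).2 rfl
      rw [deg_nsmul, hdeg s0 hs0] at hz
      exact (Nat.mul_ne_zero (by omega) (by omega)) hz
    obtain ⟨i, hXi⟩ := exists_X_mem hp hks0 hpowmem
    have hXif : X i * f' ∈ I ^ k := by
      rw [← hcol] at hXi
      exact Ideal.mem_colon_span_singleton.1 hXi
    have hne0 : X i * f' ≠ 0 := mul_ne_zero (X_ne_zero i) hf0
    have hhom : (X i * f').IsHomogeneous (1 + d) := (isHomogeneous_X K i).mul hf'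
    obtain ⟨t, ht⟩ : (X i * f').support.Nonempty :=
      Finset.nonempty_of_ne_empty (fun h => hne0 (support_eq_empty.1 h))
    have h1 : a * k ≤ deg t := (mem_lowDeg_iff _ _).1 (hlow hXif) t ht
    have h2 : deg t = 1 + d := by
      have h3 := hhom (mem_support_iff.1 ht)
      rw [deg, Finsupp.degree_eq_weight_one]
      exact h3
    have h4 : D + 1 ≤ deg t := hdv ▸ h1
    omega
  have hvnum : vNumber (I ^ k) = D := by
    rw [vNumber]
    exact le_antisymm (Nat.sInf_le hub) (le_csInf ⟨D, hub⟩ hlb)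
  rw [hvnum]
  have h5 : ((D : ℤ) + 1) = ((a * k : ℕ) : ℤ) := by exact_mod_cast hdv
  push_cast at h5
  linarith
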